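/- Suppose the measurement operator 𝒜 and data b arise from sampling entries of a skew-symmetric matrix at an index set Ω that is symmetric (if (r,s) ∈ Ω then (s,r) ∈ Ω, with b_{(s,r)} = -b_{(r,s)}). Then every iterate X⁽ᵗ⁾ of the SVP algorithm (Algorithm 1) with even target rank k is skew-symmetric, provided at each step the k-th and (k+1)-st singular values of the shifted residual matrix are separated. -/

import Mathlib

open Matrix

/-- The Frobenius norm of a real matrix. -/
noncomputable def frobNorm {n : ℕ} (M : Matrix (Fin n) (Fin n) ℝ) : ℝ :=
  Real.sqrt (∑ i, ∑ j, (M i j) ^ 2)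

/-- The singular values of a real square matrix: square roots of the eigenvalues
of `AᴴA = AᵀA`. -/
noncomputable def singVals {n : ℕ} (A : Matrix (Fin n) (Fin n) ℝ) : Fin n → ℝ :=
  fun i => Real.sqrt ((Matrix.isHermitian_conjTranspose_mul_self A).eigenvalues i)

/-!
If `Y` is a best rank-`k` Frobenius approximation of a skew-symmetric `A`, so is `-Yᵀ`:
negation and transposition preserve rank, and `A + Yᵀ = -(A - Y)ᵀ`. So it suffices that the best
approximation is unique when the eigenvalues `μ` of `AᵀA` have a gap after the `k`-th largest.
This is the equality case of Eckart–Young. Let `Q` be the orthogonal projection onto the row space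
of a best approximation `Y`. Then `‖A - Y‖² = tr (AᵀA) - tr (AᵀA Q) + ‖AQ - Y‖²`, and by Ky Fan's
maximum principle `tr (AᵀA Q)` is at most the sum of the top `k` eigenvalues, with equality only
for the spectral projection `P` onto them. Comparing with the competitor `AP` forces `Q = P` and
`Y = AQ = AP`. The SVP update keeps iterates skew-symmetric because `Ω` is symmetric and `b` is
antisymmetric, so induction on `t` finishes the proof.
-/

section
variable {ι : Type*} [Fintype ι] [DecidableEq ι] (μ q : ι → ℝ) (T : Finset ι) (β : ℝ)

lemma sum_sub_sum_mul_eq :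
    ∑ i ∈ T, μ i - ∑ i, μ i * q i =
      ∑ i ∈ T, (μ i - β) * (1 - q i) + ∑ i ∈ Tᶜ, q i * (β - μ i) +
        β * (T.card - ∑ i, q i) := by
  rw [← Finset.sum_add_sum_compl T (fun i => μ i * q i), ← Finset.sum_add_sum_compl T q]
  simp only [mul_sub, sub_mul, mul_comm (q _), Finset.sum_sub_distrib, Finset.sum_const,
    nsmul_eq_mul, ← Finset.mul_sum, mul_one]
  ring

variable {μ q T β}

lemma sum_mul_le_sum_of_gap (hβ : 0 ≤ β) (hT : ∀ i ∈ T, β < μ i) (hTc : ∀ i ∉ T, μ i ≤ β)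
    (hq0 : ∀ i, 0 ≤ q i) (hq1 : ∀ i, q i ≤ 1) (hq : ∑ i, q i ≤ T.card) :
    ∑ i, μ i * q i ≤ ∑ i ∈ T, μ i := by
  have h1 : 0 ≤ ∑ i ∈ T, (μ i - β) * (1 - q i) := Finset.sum_nonneg fun i hi =>
    mul_nonneg (sub_nonneg.2 (hT i hi).le) (sub_nonneg.2 (hq1 i))
  have h2 : 0 ≤ ∑ i ∈ Tᶜ, q i * (β - μ i) := Finset.sum_nonneg fun i hi =>
    mul_nonneg (hq0 i) (sub_nonneg.2 (hTc i (Finset.mem_compl.1 hi)))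
  have h3 : 0 ≤ β * (T.card - ∑ i, q i) := mul_nonneg hβ (sub_nonneg.2 hq)
  linarith [sum_sub_sum_mul_eq μ q T β]

lemma eq_indicator_of_sum_le_sum_mul (hβ : 0 ≤ β) (hT : ∀ i ∈ T, β < μ i)
    (hTc : ∀ i ∉ T, μ i ≤ β) (hq0 : ∀ i, 0 ≤ q i) (hq1 : ∀ i, q i ≤ 1)
    (hq : ∑ i, q i ≤ T.card) (h : ∑ i ∈ T, μ i ≤ ∑ i, μ i * q i) (i : ι) :
    q i = if i ∈ T then 1 else 0 := by
  have hslack : ∀ j ∈ T, 0 ≤ (μ j - β) * (1 - q j) := fun j hj =>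
    mul_nonneg (sub_nonneg.2 (hT j hj).le) (sub_nonneg.2 (hq1 j))
  have h2 : 0 ≤ ∑ i ∈ Tᶜ, q i * (β - μ i) := Finset.sum_nonneg fun i hi =>
    mul_nonneg (hq0 i) (sub_nonneg.2 (hTc i (Finset.mem_compl.1 hi)))
  have h3 : 0 ≤ β * (T.card - ∑ i, q i) := mul_nonneg hβ (sub_nonneg.2 hq)
  have hzero : ∑ i ∈ T, (μ i - β) * (1 - q i) = 0 := le_antisymm
    (by linarith [sum_sub_sum_mul_eq μ q T β]) (Finset.sum_nonneg hslack)
  have hone : ∀ j ∈ T, q j = 1 := fun j hj => by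
    have := (Finset.sum_eq_zero_iff_of_nonneg hslack).1 hzero j hj
    have := (mul_eq_zero.1 this).resolve_left (sub_ne_zero.2 (hT j hj).ne')
    linarith
  have hout : ∑ i ∈ Tᶜ, q i = 0 := by
    have hTsum : ∑ i ∈ T, q i = T.card := by simp [Finset.sum_congr rfl hone]
    refine le_antisymm ?_ (Finset.sum_nonneg fun i _ => hq0 i)
    linarith [Finset.sum_add_sum_compl T q]
  split_ifs with hi
  · exact hone i hi
  · exact (Finset.sum_eq_zero_iff_of_nonneg fun j _ => hq0 j).1 hout i (Finset.mem_compl.2 hi)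

end

namespace Matrix

variable {ι m : Type*} [Fintype ι] [Fintype m]

lemma isStarProjection_iff_real {Q : Matrix ι ι ℝ} :
    IsStarProjection Q ↔ Q * Q = Q ∧ Qᵀ = Q := by
  rw [isStarProjection_iff', star_eq_conjTranspose, conjTranspose_eq_transpose_of_trivial]

lemma IsStarProjection.diag_eq_sum_sq {Q : Matrix ι ι ℝ} (hQ : IsStarProjection Q) (i : ι) :
    Q i i = ∑ j, Q i j ^ 2 := by
  obtain ⟨hQQ, hQt⟩ := isStarProjection_iff_real.1 hQ
  conv_lhs => rw [← hQQ, mul_apply]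
  refine Finset.sum_congr rfl fun j _ => ?_
  rw [sq, ← transpose_apply Q j i, hQt]

lemma IsStarProjection.diag_nonneg {Q : Matrix ι ι ℝ} (hQ : IsStarProjection Q) (i : ι) :
    0 ≤ Q i i := by
  rw [hQ.diag_eq_sum_sq]
  exact Finset.sum_nonneg fun j _ => sq_nonneg _

lemma IsStarProjection.diag_le_one {Q : Matrix ι ι ℝ} (hQ : IsStarProjection Q) (i : ι) :
    Q i i ≤ 1 := by
  have hsq : Q i i ^ 2 ≤ Q i i := by
    conv_rhs => rw [hQ.diag_eq_sum_sq]
    exact Finset.single_le_sum (f := fun j => Q i j ^ 2) (fun j _ => sq_nonneg _)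
      (Finset.mem_univ i)
  nlinarith [hQ.diag_nonneg i]

lemma trace_transpose_mul_self_nonneg (X : Matrix m ι ℝ) : 0 ≤ (Xᵀ * X).trace := by
  simpa using (posSemidef_conjTranspose_mul_self X).trace_nonneg

lemma trace_transpose_mul_self_eq_zero_iff {X : Matrix m ι ℝ} : (Xᵀ * X).trace = 0 ↔ X = 0 := by
  simpa using trace_conjTranspose_mul_self_eq_zero_iff (A := X)

lemma trace_transpose_mul_mul_isStarProjection (A : Matrix m ι ℝ) {Q : Matrix ι ι ℝ}
    (hQ : IsStarProjection Q) : ((A * Q)ᵀ * (A * Q)).trace = (Aᵀ * A * Q).trace := by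
  obtain ⟨hQQ, hQt⟩ := isStarProjection_iff_real.1 hQ
  rw [transpose_mul, hQt, ← Matrix.mul_assoc, trace_mul_comm, ← Matrix.mul_assoc,
    ← Matrix.mul_assoc, hQQ, Matrix.mul_assoc, trace_mul_comm]

lemma trace_sub_mul_isStarProjection (A : Matrix m ι ℝ) {Q : Matrix ι ι ℝ}
    (hQ : IsStarProjection Q) :
    ((A - A * Q)ᵀ * (A - A * Q)).trace = (Aᵀ * A).trace - (Aᵀ * A * Q).trace := by
  obtain ⟨-, hQt⟩ := isStarProjection_iff_real.1 hQ
  have hcross : ((A * Q)ᵀ * A).trace = (Aᵀ * A * Q).trace := by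
    rw [transpose_mul, hQt, Matrix.mul_assoc, trace_mul_comm]
  rw [transpose_sub, Matrix.sub_mul, Matrix.mul_sub, Matrix.mul_sub, trace_sub, trace_sub,
    trace_sub, trace_transpose_mul_mul_isStarProjection A hQ, hcross, ← Matrix.mul_assoc]
  ring

lemma trace_sub_eq_add_of_mul_eq_self (A Y : Matrix m ι ℝ) {Q : Matrix ι ι ℝ}
    (hQ : IsStarProjection Q) (hYQ : Y * Q = Y) :
    ((A - Y)ᵀ * (A - Y)).trace =
      ((A - A * Q)ᵀ * (A - A * Q)).trace + ((A * Q - Y)ᵀ * (A * Q - Y)).trace := by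
  have h₁ : A * Q - Y = (A - Y) * Q := by rw [Matrix.sub_mul, hYQ]
  have h₂ : A - A * Q = (A - Y) - (A - Y) * Q := by rw [← h₁]; abel
  rw [h₁, h₂, trace_sub_mul_isStarProjection _ hQ, trace_transpose_mul_mul_isStarProjection _ hQ]
  ring

variable [DecidableEq ι]

def coordProj (T : Finset ι) : Matrix ι ι ℝ :=
  diagonal fun i => if i ∈ T then 1 else 0

lemma isStarProjection_coordProj (T : Finset ι) : IsStarProjection (coordProj T) := by
  rw [isStarProjection_iff_real, coordProj, diagonal_mul_diagonal, diagonal_transpose]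
  refine ⟨congrArg diagonal (funext fun i => ?_), rfl⟩
  split_ifs <;> simp

lemma trace_coordProj (T : Finset ι) : (coordProj T).trace = T.card := by
  simp [coordProj]

lemma IsStarProjection.eq_coordProj_of_diag {Q : Matrix ι ι ℝ} (hQ : IsStarProjection Q)
    {T : Finset ι} (h : ∀ i, Q i i = if i ∈ T then 1 else 0) : Q = coordProj T := by
  obtain ⟨hQQ, hQt⟩ := isStarProjection_iff_real.1 hQ
  obtain ⟨hDD, hDt⟩ := isStarProjection_iff_real.1 (isStarProjection_coordProj T)
  rw [← sub_eq_zero, ← trace_transpose_mul_self_eq_zero_iff, transpose_sub, hQt, hDt, sub_mul,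
    mul_sub, mul_sub, hQQ, hDD, trace_sub, trace_sub, trace_sub, trace_mul_comm (coordProj T) Q]
  simp [coordProj, trace, mul_diagonal, h]

lemma IsStarProjection.conj_orthogonal {D U : Matrix ι ι ℝ} (hD : IsStarProjection D)
    (hU : Uᵀ * U = 1) : IsStarProjection (U * D * Uᵀ) := by
  rw [isStarProjection_iff_real] at hD ⊢
  constructor
  · calc U * D * Uᵀ * (U * D * Uᵀ) = U * (D * (Uᵀ * U) * D) * Uᵀ := by simp only [mul_assoc]
      _ = U * D * Uᵀ := by rw [hU, mul_one, hD.1, mul_assoc]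
  · rw [transpose_mul, transpose_mul, transpose_transpose, hD.2, mul_assoc]

lemma IsStarProjection.transpose_conj_orthogonal {Q U : Matrix ι ι ℝ}
    (hQ : IsStarProjection Q) (hU : U * Uᵀ = 1) : IsStarProjection (Uᵀ * Q * U) := by
  simpa only [transpose_transpose] using hQ.conj_orthogonal (U := Uᵀ) (by rwa [transpose_transpose])

lemma trace_transpose_conj_orthogonal {Q U : Matrix ι ι ℝ} (hU : U * Uᵀ = 1) :
    (Uᵀ * Q * U).trace = Q.trace := by
  rw [trace_mul_cycle, hU, one_mul]

lemma trace_diagonal_mul (μ : ι → ℝ) (B : Matrix ι ι ℝ) :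
    (diagonal μ * B).trace = ∑ i, μ i * B i i := by
  simp [trace, diagonal_mul]

lemma trace_conj_diagonal_mul (U : Matrix ι ι ℝ) (μ : ι → ℝ) (Q : Matrix ι ι ℝ) :
    (U * diagonal μ * Uᵀ * Q).trace = ∑ i, μ i * (Uᵀ * Q * U) i i := by
  rw [← trace_diagonal_mul]
  simp only [mul_assoc]
  rw [trace_mul_comm]
  simp only [mul_assoc]

lemma trace_conj_diagonal_mul_le_sum_of_gap {U : Matrix ι ι ℝ} (hU : U * Uᵀ = 1) {μ : ι → ℝ}
    {T : Finset ι} {β : ℝ} (hβ : 0 ≤ β) (hT : ∀ i ∈ T, β < μ i) (hTc : ∀ i ∉ T, μ i ≤ β)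
    {Q : Matrix ι ι ℝ} (hQ : IsStarProjection Q) (hQtr : Q.trace ≤ T.card) :
    (U * diagonal μ * Uᵀ * Q).trace ≤ ∑ i ∈ T, μ i := by
  have hQ' := hQ.transpose_conj_orthogonal hU
  rw [trace_conj_diagonal_mul]
  exact sum_mul_le_sum_of_gap hβ hT hTc hQ'.diag_nonneg hQ'.diag_le_one
    ((trace_transpose_conj_orthogonal hU).trans_le hQtr)

lemma eq_conj_coordProj_of_sum_le_trace_mul {U : Matrix ι ι ℝ} (hU : U * Uᵀ = 1)
    {μ : ι → ℝ} {T : Finset ι} {β : ℝ} (hβ : 0 ≤ β) (hT : ∀ i ∈ T, β < μ i)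
    (hTc : ∀ i ∉ T, μ i ≤ β) {Q : Matrix ι ι ℝ} (hQ : IsStarProjection Q)
    (hQtr : Q.trace ≤ T.card) (h : ∑ i ∈ T, μ i ≤ (U * diagonal μ * Uᵀ * Q).trace) :
    Q = U * coordProj T * Uᵀ := by
  have hQ' := hQ.transpose_conj_orthogonal hU
  rw [trace_conj_diagonal_mul] at h
  have hdiag := eq_indicator_of_sum_le_sum_mul hβ hT hTc hQ'.diag_nonneg hQ'.diag_le_one
    ((trace_transpose_conj_orthogonal hU).trans_le hQtr) h
  rw [← hQ'.eq_coordProj_of_diag hdiag]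
  simp only [← mul_assoc, hU, one_mul]
  rw [mul_assoc, hU, mul_one]

lemma IsHermitian.exists_orthogonal_diagonalization {S : Matrix ι ι ℝ} (hS : S.IsHermitian) :
    ∃ U : Matrix ι ι ℝ, Uᵀ * U = 1 ∧ U * Uᵀ = 1 ∧ S = U * diagonal hS.eigenvalues * Uᵀ := by
  have hU := hS.eigenvectorUnitary.2
  refine ⟨hS.eigenvectorUnitary, ?_, ?_, ?_⟩
  · simpa [star_eq_conjTranspose] using mem_unitaryGroup_iff'.1 hU
  · simpa [star_eq_conjTranspose] using mem_unitaryGroup_iff.1 hU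
  · conv_lhs => rw [hS.spectral_theorem]
    simp [Unitary.conjStarAlgAut_apply, star_eq_conjTranspose]

lemma exists_isStarProjection_mul_eq_self (Y : Matrix m ι ℝ) :
    ∃ Q : Matrix ι ι ℝ, IsStarProjection Q ∧ Y * Q = Y ∧ Q.trace = Y.rank := by
  have hS : (Yᵀ * Y).IsHermitian := by simpa using isHermitian_conjTranspose_mul_self Y
  obtain ⟨U, hU, -, hYY⟩ := hS.exists_orthogonal_diagonalization
  set T := Finset.univ.filter fun i => hS.eigenvalues i ≠ 0
  refine ⟨U * coordProj T * Uᵀ, (isStarProjection_coordProj T).conj_orthogonal hU, ?_, ?_⟩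
  · have hSQ : Yᵀ * Y * (U * coordProj T * Uᵀ) = Yᵀ * Y := by
      rw [hYY]
      calc U * diagonal hS.eigenvalues * Uᵀ * (U * coordProj T * Uᵀ)
          = U * (diagonal hS.eigenvalues * (Uᵀ * U) * coordProj T) * Uᵀ := by
            simp only [mul_assoc]
        _ = U * diagonal hS.eigenvalues * Uᵀ := by
            rw [hU, mul_one, coordProj, diagonal_mul_diagonal]
            congr 3
            funext i
            by_cases hi : hS.eigenvalues i = 0 <;> simp [T, hi]
    have h := trace_sub_mul_isStarProjection Y ((isStarProjection_coordProj T).conj_orthogonal hU)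
    rw [hSQ, sub_self, trace_transpose_mul_self_eq_zero_iff, sub_eq_zero] at h
    exact h.symm
  · rw [trace_mul_cycle, hU, one_mul, trace_coordProj, ← rank_transpose_mul_self Y,
      hS.rank_eq_card_non_zero_eigs, Fintype.card_subtype]

lemma rank_conj_coordProj_le (U : Matrix ι ι ℝ) (T : Finset ι) :
    (U * coordProj T * Uᵀ).rank ≤ T.card := by
  refine (rank_mul_le_left _ _).trans ((rank_mul_le_right _ _).trans ?_)
  rw [coordProj, rank_diagonal, Fintype.card_subtype]
  exact Finset.card_le_card fun i => by simp

theorem eq_mul_conj_coordProj_of_best_approx (A : Matrix m ι ℝ) {U : Matrix ι ι ℝ}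
    (hU : Uᵀ * U = 1) (hU' : U * Uᵀ = 1) {μ : ι → ℝ} (hA : Aᵀ * A = U * diagonal μ * Uᵀ)
    {T : Finset ι} {β : ℝ} (hβ : 0 ≤ β) (hT : ∀ i ∈ T, β < μ i) (hTc : ∀ i ∉ T, μ i ≤ β)
    {Y : Matrix m ι ℝ} (hY : Y.rank ≤ T.card)
    (hmin : ∀ Z : Matrix m ι ℝ, Z.rank ≤ T.card →
      ((A - Y)ᵀ * (A - Y)).trace ≤ ((A - Z)ᵀ * (A - Z)).trace) :
    Y = A * (U * coordProj T * Uᵀ) := by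
  obtain ⟨Q, hQ, hYQ, hQtr⟩ := exists_isStarProjection_mul_eq_self Y
  have hQk : Q.trace ≤ T.card := hQtr ▸ (Nat.cast_le.2 hY)
  have hP : IsStarProjection (U * coordProj T * Uᵀ) :=
    (isStarProjection_coordProj T).conj_orthogonal hU
  have hPtr : (Aᵀ * A * (U * coordProj T * Uᵀ)).trace = ∑ i ∈ T, μ i := by
    have hconj : Uᵀ * (U * coordProj T * Uᵀ) * U = coordProj T := by
      simp only [← Matrix.mul_assoc, hU, Matrix.one_mul]
      rw [Matrix.mul_assoc, hU, Matrix.mul_one]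
    rw [hA, trace_conj_diagonal_mul, hconj]
    simp [coordProj]
  have hcompare := hmin (A * (U * coordProj T * Uᵀ))
    ((rank_mul_le_right _ _).trans (rank_conj_coordProj_le U T))
  rw [trace_sub_eq_add_of_mul_eq_self A Y hQ hYQ, trace_sub_mul_isStarProjection A hQ,
    trace_sub_mul_isStarProjection A hP, hPtr] at hcompare
  have hle := trace_conj_diagonal_mul_le_sum_of_gap hU' hβ hT hTc hQ hQk
  rw [← hA] at hle
  have hres : ((A * Q - Y)ᵀ * (A * Q - Y)).trace = 0 :=
    le_antisymm (by linarith) (trace_transpose_mul_self_nonneg _)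
  have hQP : Q = U * coordProj T * Uᵀ :=
    eq_conj_coordProj_of_sum_le_trace_mul hU' hβ hT hTc hQ hQk (by rw [← hA]; linarith)
  rw [trace_transpose_mul_self_eq_zero_iff, sub_eq_zero] at hres
  rw [← hres, hQP]

theorem transpose_eq_neg_of_best_approx {A Y : Matrix ι ι ℝ} (hA : Aᵀ = -A) {U : Matrix ι ι ℝ}
    (hU : Uᵀ * U = 1) (hU' : U * Uᵀ = 1) {μ : ι → ℝ} (hAA : Aᵀ * A = U * diagonal μ * Uᵀ)
    {T : Finset ι} {β : ℝ} (hβ : 0 ≤ β) (hT : ∀ i ∈ T, β < μ i) (hTc : ∀ i ∉ T, μ i ≤ β)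
    (hY : Y.rank ≤ T.card)
    (hmin : ∀ Z : Matrix ι ι ℝ, Z.rank ≤ T.card →
      ((A - Y)ᵀ * (A - Y)).trace ≤ ((A - Z)ᵀ * (A - Z)).trace) :
    Yᵀ = -Y := by
  have hY' : (-Yᵀ).rank ≤ T.card := by
    rw [← neg_one_smul ℝ, rank_smul_of_mem_nonZeroDivisors _ (by simp), rank_transpose]
    exact hY
  have herr : ((A - -Yᵀ)ᵀ * (A - -Yᵀ)).trace = ((A - Y)ᵀ * (A - Y)).trace := by
    have : A - -Yᵀ = -(A - Y)ᵀ := by rw [transpose_sub, hA]; abel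
    rw [this, transpose_neg, transpose_transpose, neg_mul_neg, trace_mul_comm]
  have h₁ := eq_mul_conj_coordProj_of_best_approx A hU hU' hAA hβ hT hTc hY hmin
  have h₂ := eq_mul_conj_coordProj_of_best_approx A hU hU' hAA hβ hT hTc hY' (herr ▸ hmin)
  exact neg_eq_iff_eq_neg.1 (h₂.trans h₁.symm)

end Matrix

lemma frobNorm_eq_sqrt_trace {n : ℕ} (X : Matrix (Fin n) (Fin n) ℝ) :
    frobNorm X = √(Xᵀ * X).trace := by
  rw [frobNorm, trace, Finset.sum_comm]
  simp [mul_apply, sq]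

lemma frobNorm_le_frobNorm_iff {n : ℕ} {X Z : Matrix (Fin n) (Fin n) ℝ} :
    frobNorm X ≤ frobNorm Z ↔ (Xᵀ * X).trace ≤ (Zᵀ * Z).trace := by
  rw [frobNorm_eq_sqrt_trace, frobNorm_eq_sqrt_trace,
    Real.sqrt_le_sqrt_iff (trace_transpose_mul_self_nonneg Z)]

lemma exists_finset_of_sorted_gap {n k : ℕ} (hkn : k < n) (μ : Fin n → ℝ)
    (g : Equiv.Perm (Fin n)) (hsort : ∀ i j : Fin n, i ≤ j → μ (g j) ≤ μ (g i))
    (hgap : μ (g ⟨k, hkn⟩) < μ (g ⟨k - 1, (Nat.sub_le k 1).trans_lt hkn⟩)) :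
    ∃ T : Finset (Fin n), T.card = k ∧ (∀ i ∈ T, μ (g ⟨k, hkn⟩) < μ i) ∧
      ∀ i ∉ T, μ i ≤ μ (g ⟨k, hkn⟩) := by
  refine ⟨(Finset.univ.filter fun j : Fin n => (j : ℕ) < k).map g.toEmbedding, ?_, ?_, ?_⟩
  · rw [Finset.card_map, Fin.card_filter_val_lt, min_eq_right hkn.le]
  all_goals simp only [Finset.mem_map_equiv, Finset.mem_filter, Finset.mem_univ, true_and,
    not_lt]
  · intro i hi
    calc μ (g ⟨k, hkn⟩) < μ (g ⟨k - 1, (Nat.sub_le k 1).trans_lt hkn⟩) := hgap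
      _ ≤ μ (g (g.symm i)) := hsort _ _ (Fin.le_def.2 (by simp only; omega))
      _ = μ i := by rw [g.apply_symm_apply]
  · intro i hi
    simpa using hsort ⟨k, hkn⟩ (g.symm i) (Fin.le_def.2 hi)

theorem transpose_eq_neg_of_frobNorm_best_approx {n k : ℕ} (hkn : k < n)
    {A Y : Matrix (Fin n) (Fin n) ℝ} (hA : Aᵀ = -A) (hY : Y.rank ≤ k)
    (hmin : ∀ Z : Matrix (Fin n) (Fin n) ℝ, Z.rank ≤ k → frobNorm (A - Y) ≤ frobNorm (A - Z))
    (g : Equiv.Perm (Fin n)) (hsort : ∀ i j : Fin n, i ≤ j → singVals A (g j) ≤ singVals A (g i))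
    (hgap : singVals A (g ⟨k, hkn⟩) < singVals A (g ⟨k - 1, (Nat.sub_le k 1).trans_lt hkn⟩)) :
    Yᵀ = -Y := by
  have hS := isHermitian_conjTranspose_mul_self A
  have hμ : ∀ i, 0 ≤ hS.eigenvalues i := (posSemidef_conjTranspose_mul_self A).eigenvalues_nonneg
  obtain ⟨U, hU, hU', hAA⟩ := hS.exists_orthogonal_diagonalization
  replace hAA : Aᵀ * A = U * diagonal hS.eigenvalues * Uᵀ := by
    rwa [← conjTranspose_eq_transpose_of_trivial A]
  obtain ⟨T, rfl, hT, hTc⟩ := exists_finset_of_sorted_gap hkn (singVals A) g hsort hgap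
  exact transpose_eq_neg_of_best_approx hA hU hU' hAA (hμ _)
    (fun i hi => (Real.sqrt_lt_sqrt_iff (hμ _)).1 (hT i hi))
    (fun i hi => (Real.sqrt_le_sqrt_iff (hμ _)).1 (hTc i hi)) hY
    (fun Z hZ => frobNorm_le_frobNorm_iff.1 (hmin Z hZ))

lemma transpose_of_sampled_update_eq_neg {ι : Type*} [DecidableEq ι] (Ω : Finset (ι × ι))
    (hΩ : ∀ p : ι × ι, p ∈ Ω → (p.2, p.1) ∈ Ω) (b : ι × ι → ℝ)
    (hb : ∀ p ∈ Ω, b (p.2, p.1) = -b p) (η : ℝ) {X : Matrix ι ι ℝ} (hX : Xᵀ = -X) :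
    (of fun r s => if (r, s) ∈ Ω then X r s - η * (X r s - b (r, s)) else 0)ᵀ =
      -of fun r s => if (r, s) ∈ Ω then X r s - η * (X r s - b (r, s)) else 0 := by
  ext i j
  simp only [transpose_apply, Matrix.neg_apply, of_apply]
  by_cases h : (i, j) ∈ Ω
  · have hX' : X j i = -X i j := congrFun (congrFun hX i) j
    have hb' : b (j, i) = -b (i, j) := hb (i, j) h
    rw [if_pos (hΩ (i, j) h), if_pos h, hX', hb']
    ring
  · rw [if_neg (fun h' => h (hΩ (j, i) h')), if_neg h, neg_zero]

/-- If the sampled data come from a skew-symmetric matrix (symmetric index set `Ω`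
with antisymmetric values `b`), then every iterate of the SVP algorithm with even
target rank `k` is skew-symmetric, provided at each step the `k`-th and `(k+1)`-st
largest singular values of the shifted residual matrix are separated. -/
theorem svp_iterates_skew (n k : ℕ) (hkn : k < n)
    (Ω : Finset (Fin n × Fin n)) (hΩ : ∀ p : Fin n × Fin n, p ∈ Ω → (p.2, p.1) ∈ Ω)
    (b : Fin n × Fin n → ℝ) (hb : ∀ p ∈ Ω, b (p.2, p.1) = -b p)
    (η : ℝ)
    (M : Matrix (Fin n) (Fin n) ℝ → Matrix (Fin n) (Fin n) ℝ)
    (hM : ∀ X, M X = Matrix.of fun r s =>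
      if (r, s) ∈ Ω then X r s - η * (X r s - b (r, s)) else 0)
    (X : ℕ → Matrix (Fin n) (Fin n) ℝ) (hX0 : X 0 = 0)
    (hXr : ∀ t, (X (t + 1)).rank ≤ k)
    (hXbest : ∀ t, ∀ Z : Matrix (Fin n) (Fin n) ℝ, Z.rank ≤ k →
      frobNorm (M (X t) - X (t + 1)) ≤ frobNorm (M (X t) - Z))
    (hsep : ∀ t, ∃ g : Equiv.Perm (Fin n),
      (∀ i j : Fin n, i ≤ j → singVals (M (X t)) (g j) ≤ singVals (M (X t)) (g i)) ∧
      singVals (M (X t)) (g ⟨k, hkn⟩) < singVals (M (X t)) (g ⟨k - 1, by omega⟩)) :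
    ∀ t, (X t)ᵀ = -(X t) := by
  intro t
  induction t with
  | zero => rw [hX0, transpose_zero, neg_zero]
  | succ t ih =>
    obtain ⟨g, hsort, hgap⟩ := hsep t
    have hskew : (M (X t))ᵀ = -M (X t) := by
      rw [hM]
      exact transpose_of_sampled_update_eq_neg Ω hΩ b hb η ih
    exact transpose_eq_neg_of_frobNorm_best_approx hkn hskew (hXr t) (hXbest t) g hsort hgap
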